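/- arXiv:0908.3448 — 3 statements merged into one kernel-verified Lean document; each statement's English description precedes it below -/
import Mathlib

section
/- If m − p is even and 1 ≤ p ≤ m, then s(m,p) = s(m+1,p), where s(m,p) is the maximum k for which some k × m matrix over Z/2 has every p columns spanning (Z/2)^k. -/
open Matrix Finset

/-- Every `p` columns of `A` span `(ZMod 2)^k`. -/
def SpanProp (k m p : ℕ) (A : Matrix (Fin k) (Fin m) (ZMod 2)) : Prop :=
  ∀ S : Finset (Fin m), S.card = p →
    Submodule.span (ZMod 2) (Aᵀ '' (S : Set (Fin m))) = ⊤

/-- The Buchstaber-type invariant: the maximum `k` such that some `k × m`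
matrix over `ZMod 2` has every `p` columns spanning. -/
noncomputable def s (m p : ℕ) : ℕ :=
  sSup {k : ℕ | ∃ A : Matrix (Fin k) (Fin m) (ZMod 2), SpanProp k m p A}

/-- `mk k b`: maximum of `∑ a_v` over nonneg integer tuples indexed by nonzero
vectors of `(ZMod 2)^k` satisfying `∑_{(u,v)=0} a_v ≤ b` for each nonzero `u`. -/
noncomputable def mkInv (k b : ℕ) : ℕ :=
  sSup {m : ℕ | ∃ a : (Fin k → ZMod 2) → ℕ,
    (∀ u : Fin k → ZMod 2, u ≠ 0 →
      ∑ v ∈ Finset.univ.filter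
        (fun v : Fin k → ZMod 2 => v ≠ 0 ∧ dotProduct u v = 0), a v ≤ b) ∧
    ∑ v ∈ Finset.univ.filter (fun v : Fin k → ZMod 2 => v ≠ 0), a v = m}

/-! Every `p` columns of `A` span iff every hyperplane `u⊥` contains fewer than `p` columns.
Adjoining the sum of all columns puts one more column into `u⊥` exactly when an even number of
columns lies outside `u⊥`. If `u⊥` already contained `p - 1` columns, that number is
`m - p + 1`, which is odd when `m - p` is even; so the enlarged matrix keeps the spanning
property and `s m p ≤ s (m + 1) p`. The reverse inequality comes from deleting a column. -/

theorem span_eq_top_iff_forall_dotProduct_eq_zero {K ι : Type*} [Field K] [Fintype ι]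
    [DecidableEq ι] (s : Set (ι → K)) :
    Submodule.span K s = ⊤ ↔ ∀ u : ι → K, (∀ x ∈ s, u ⬝ᵥ x = 0) → u = 0 := by
  have orthogonal_iff (u : ι → K) :
      (∀ x ∈ s, u ⬝ᵥ x = 0) ↔ Submodule.span K s ≤ LinearMap.ker (dotProductEquiv K ι u) := by
    simp [Submodule.span_le, Set.subset_def]
  constructor
  · intro hs u hu
    rw [orthogonal_iff, hs, top_le_iff, LinearMap.ker_eq_top] at hu
    exact (dotProductEquiv K ι).map_eq_zero_iff.mp hu
  · intro h
    rw [← Submodule.dualAnnihilator_eq_bot_iff, Submodule.eq_bot_iff]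
    intro f hf
    obtain ⟨u, rfl⟩ := (dotProductEquiv K ι).surjective f
    rw [h u ((orthogonal_iff u).mpr fun x hx => (Submodule.mem_dualAnnihilator _).mp hf x hx),
      map_zero]

theorem ZMod.sum_eq_card_filter_ne_zero {ι : Type*} [Fintype ι] (f : ι → ZMod 2) :
    ∑ i, f i = (#{i | f i ≠ 0} : ZMod 2) := by
  rw [natCast_card_filter]
  refine Finset.sum_congr rfl fun i _ => ?_
  generalize f i = x
  fin_cases x <;> rfl

theorem spanProp_iff {k m p : ℕ} {A : Matrix (Fin k) (Fin m) (ZMod 2)} :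
    SpanProp k m p A ↔ ∀ u ≠ 0, #{j | u ⬝ᵥ Aᵀ j = 0} < p := by
  constructor
  · intro h u hu
    by_contra! hp
    obtain ⟨S, hSZ, hS⟩ := exists_subset_card_eq hp
    refine hu ((span_eq_top_iff_forall_dotProduct_eq_zero _).mp (h S hS) u ?_)
    rintro _ ⟨j, hj, rfl⟩
    exact (mem_filter.mp (hSZ hj)).2
  · intro h S hS
    rw [span_eq_top_iff_forall_dotProduct_eq_zero]
    intro u hu
    by_contra hu0
    have hSZ : S ⊆ ({j | u ⬝ᵥ Aᵀ j = 0} : Finset (Fin m)) :=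
      fun j hj => mem_filter.mpr ⟨mem_univ j, hu _ ⟨j, hj, rfl⟩⟩
    exact (h u hu0).not_ge (hS ▸ card_le_card hSZ)

section consColumnSum

variable {R : Type*} {k m : ℕ}

def consColumnSum [AddCommMonoid R] (A : Matrix (Fin k) (Fin m) R) :
    Matrix (Fin k) (Fin (m + 1)) R :=
  Matrix.of fun i => Fin.cons (∑ j, A i j) (A i)

theorem transpose_consColumnSum_zero [AddCommMonoid R] (A : Matrix (Fin k) (Fin m) R) :
    (consColumnSum A)ᵀ 0 = fun i => ∑ j, A i j :=
  rfl

theorem card_dotProduct_consColumnSum_eq_zero [CommSemiring R] [DecidableEq R]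
    (A : Matrix (Fin k) (Fin m) R) (u : Fin k → R) :
    #{j | u ⬝ᵥ (consColumnSum A)ᵀ j = 0} =
      (if ∑ j, u ⬝ᵥ Aᵀ j = 0 then 1 else 0) + #{j | u ⬝ᵥ Aᵀ j = 0} := by
  have dotProduct_column_sum : u ⬝ᵥ (fun i => ∑ j, A i j) = ∑ j, u ⬝ᵥ Aᵀ j := by
    simp only [dotProduct, transpose_apply, mul_sum]
    exact sum_comm
  rw [Fin.card_filter_univ_succ', transpose_consColumnSum_zero, dotProduct_column_sum]
  rfl

end consColumnSum

theorem SpanProp.consColumnSum {k m p : ℕ} {A : Matrix (Fin k) (Fin m) (ZMod 2)}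
    (hA : SpanProp k m p A) (hpar : m % 2 = p % 2) : SpanProp k (m + 1) p (consColumnSum A) := by
  rw [spanProp_iff] at hA ⊢
  intro u hu
  have hz := hA u hu
  have hzm : #{j | u ⬝ᵥ Aᵀ j = 0} ≤ m := card_le_univ _ |>.trans_eq (Fintype.card_fin m)
  rw [card_dotProduct_consColumnSum_eq_zero, ZMod.sum_eq_card_filter_ne_zero, filter_not,
    card_sdiff_of_subset (filter_subset _ _), card_univ, Fintype.card_fin]
  split_ifs with h
  · rw [ZMod.natCast_eq_zero_iff_even, Nat.even_iff] at h
    omega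
  · omega

theorem SpanProp.submatrix {k m n p : ℕ} {B : Matrix (Fin k) (Fin n) (ZMod 2)}
    (hB : SpanProp k n p B) (e : Fin m ↪ Fin n) : SpanProp k m p (B.submatrix id e) := by
  rw [spanProp_iff] at hB ⊢
  intro u hu
  refine lt_of_le_of_lt (card_le_card_of_injOn e ?_ e.injective.injOn) (hB u hu)
  intro j hj
  exact mem_filter.mpr ⟨mem_univ _, (mem_filter.mp hj).2⟩

theorem s_succ_of_even_diff_general (m p : ℕ)
    (hpar : m % 2 = p % 2) : s m p = s (m + 1) p :=
  congrArg sSup <| Set.ext fun _ =>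
    ⟨fun ⟨_, hA⟩ => ⟨_, hA.consColumnSum hpar⟩, fun ⟨_, hB⟩ => ⟨_, hB.submatrix (Fin.succEmb m)⟩⟩

theorem s_succ_of_even_diff (m p : ℕ) (hp : 1 ≤ p) (hpm : p ≤ m)
    (hpar : m % 2 = p % 2) : s m p = s (m + 1) p :=
  s_succ_of_even_diff_general m p hpar
end

section
/- For k ≥ 5, m_k(k) = k + 2; moreover m_4(4) = 8. Equivalently, for k ≥ 5 there is no k × (k+3) matrix over Z/2 in which every k+1 columns span (Z/2)^k, while there is such a k × (k+2) matrix. -/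
open Matrix Finset

/-!
A tuple `a` is a multiset of nonzero columns, and the constraint says that every hyperplane `u⊥`
contains at most `b` of them. For `b = k` and `k + 3` columns, every nonzero `u` is then
non-orthogonal to at least three columns, so `u ↦ (u ⬝ᵥ cⱼ)ⱼ` is a binary linear code of length
`k + 3`, dimension `k` and minimum distance `3`, and the Hamming bound `2^k (k + 4) ≤ 2^(k+3)`
forces `k ≤ 4`. The same holds for a matrix whose every `k + 1` columns span, since columns lying
in a hyperplane do not span. Conversely, in `[I | 1 1]` every `k + 1` columns span, and its column
multiplicities give `m_k(k) ≥ k + 2`. For `k = 4`, double counting orthogonal pairs gives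
`7 m ≤ 15 · 4`, and the eight odd-weight vectors attain `m = 8`.
-/

theorem hammingNorm_sub_le {ι β : Type*} [Fintype ι] [AddCommGroup β] [DecidableEq β]
    (x y : ι → β) :
    hammingNorm (x - y) ≤ hammingNorm x + hammingNorm y := by
  rw [sub_eq_neg_add, ← hammingDist_eq_hammingNorm, ← hammingDist_zero_right y,
    ← hammingDist_zero_left, add_comm]
  exact hammingDist_triangle y 0 x

/-- Hamming bound: `(v, o) ↦ c v + e o` is injective, where `e o` runs over the vectors of weight
at most one. -/
theorem card_mul_le_of_three_le_hammingNorm {V ι : Type*} [AddCommGroup V] [Fintype V]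
    [Fintype ι] [DecidableEq ι] (c : V →+ ι → ZMod 2)
    (hc : ∀ v, v ≠ 0 → 3 ≤ hammingNorm (c v)) :
    Fintype.card V * (Fintype.card ι + 1) ≤ 2 ^ Fintype.card ι := by
  let e : Option ι → ι → ZMod 2 := fun o => o.elim 0 (Pi.single · 1)
  have he_norm : ∀ o, hammingNorm (e o) ≤ 1 := by
    rintro (_ | i)
    · simp [e]
    · simp [e, hammingNorm, Pi.single_apply, filter_eq']
  have he_inj : Function.Injective e := by
    rintro (_ | i) (_ | i') h
    · rfl
    · simpa [e] using congrFun h i'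
    · simpa [e] using congrFun h i
    · simpa [e, Pi.single_apply, eq_comm] using congrFun h i
  have hinj : Function.Injective fun p : V × Option ι => c p.1 + e p.2 := by
    rintro ⟨v, o⟩ ⟨v', o'⟩ (h : c v + e o = c v' + e o')
    obtain rfl : v = v' := by
      by_contra hne
      have hdiff : c (v - v') = e o' - e o := by
        rw [map_sub, sub_eq_sub_iff_add_eq_add, h, add_comm]
      have h3 : 3 ≤ hammingNorm (e o' - e o) := hdiff ▸ hc _ (sub_ne_zero.mpr hne)
      linarith [hammingNorm_sub_le (e o') (e o), he_norm o, he_norm o']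
    rw [he_inj (add_left_cancel h)]
  calc Fintype.card V * (Fintype.card ι + 1) = Fintype.card (V × Option ι) := by simp
    _ ≤ Fintype.card (ι → ZMod 2) := Fintype.card_le_of_injective _ hinj
    _ = 2 ^ Fintype.card ι := by simp

def ColumnsInHyperplaneLE {k : ℕ} {ι : Type*} [Fintype ι] (b : ℕ)
    (A : Matrix (Fin k) ι (ZMod 2)) : Prop :=
  ∀ u : Fin k → ZMod 2, u ≠ 0 → #{j | (u ᵥ* A) j = 0} ≤ b

theorem le_four_of_columnsInHyperplaneLE {k : ℕ} {A : Matrix (Fin k) (Fin (k + 3)) (ZMod 2)}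
    (hA : ColumnsInHyperplaneLE k A) : k ≤ 4 := by
  have hnorm (u : Fin k → ZMod 2) (hu : u ≠ 0) : 3 ≤ hammingNorm (u ᵥ* A) := by
    have hsplit := card_filter_add_card_filter_not (s := univ) (fun j => (u ᵥ* A) j = 0)
    have := hA u hu
    rw [card_univ, Fintype.card_fin] at hsplit
    simp only [hammingNorm, ne_eq]
    omega
  have hbound := card_mul_le_of_three_le_hammingNorm A.vecMulLinear.toAddMonoidHom hnorm
  simp only [Fintype.card_pi, Fintype.card_fin, ZMod.card, prod_const, card_univ, pow_add] at hbound
  have := Nat.le_of_mul_le_mul_left hbound (by positivity)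
  omega

theorem SpanProp.columnsInHyperplaneLE {k n b : ℕ} {A : Matrix (Fin k) (Fin n) (ZMod 2)}
    (hA : SpanProp k n (b + 1) A) : ColumnsInHyperplaneLE b A := by
  intro u hu
  by_contra! hb
  obtain ⟨S, hS, hScard⟩ := exists_subset_card_eq (Nat.succ_le_of_lt hb)
  refine hu (dotProduct_eq_zero u fun w => ?_)
  have hker : Submodule.span (ZMod 2) (Aᵀ '' S) ≤
      LinearMap.ker (dotProductBilin (ZMod 2) (ZMod 2) u) := by
    rw [Submodule.span_le]
    rintro _ ⟨j, hj, rfl⟩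
    exact (mem_filter.mp (hS hj)).2
  rw [hA S hScard, top_le_iff, LinearMap.ker_eq_top] at hker
  simpa using LinearMap.congr_fun hker w

def identityAppendOnes (k : ℕ) : Matrix (Fin k) (Fin (k + 2)) (ZMod 2) :=
  (of (Fin.append (fun i => Pi.single i 1) fun _ => 1))ᵀ

theorem spanProp_identityAppendOnes (k : ℕ) :
    SpanProp k (k + 2) (k + 1) (identityAppendOnes k) := by
  intro S hS
  have hone_missing : ∀ j j', j ≠ j' → j ∉ S → j' ∈ S := by
    intro j j' hne hj
    by_contra hj'
    have : S ⊆ univ \ {j, j'} := fun x hx => by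
      simp only [mem_sdiff, mem_univ, mem_insert, mem_singleton, true_and]
      rintro (rfl | rfl) <;> contradiction
    have := card_le_card this
    rw [card_sdiff_of_subset (subset_univ _), card_pair hne, card_univ, Fintype.card_fin] at this
    omega
  set W := Submodule.span (ZMod 2) ((identityAppendOnes k)ᵀ '' S)
  have hcol (j : Fin (k + 2)) (hj : j ∈ S) :
      Fin.append (fun i => Pi.single i (1 : ZMod 2)) (fun _ => 1) j ∈ W :=
    Submodule.subset_span ⟨j, hj, rfl⟩
  have hsingle (i : Fin k) : Pi.single i 1 ∈ W := by
    by_cases hi : Fin.castAdd 2 i ∈ S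
    · simpa using hcol _ hi
    have hones : (1 : Fin k → ZMod 2) ∈ W := by
      simpa using hcol (Fin.natAdd k 0) (hone_missing _ _ (by simp [Fin.ext_iff]; omega) hi)
    have hother (t : Fin k) (ht : t ≠ i) : Pi.single t 1 ∈ W := by
      simpa using hcol _ (hone_missing _ _ (fun h => ht (Fin.castAdd_inj.mp h).symm) hi)
    have hsum : Pi.single i 1 = 1 - ∑ t ∈ univ.erase i, Pi.single t (1 : ZMod 2) := by
      rw [eq_sub_iff_add_eq, add_sum_erase univ (fun t => Pi.single t (1 : ZMod 2)) (mem_univ i)]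
      simpa using univ_sum_single (1 : Fin k → ZMod 2)
    rw [hsum]
    exact sub_mem hones (sum_mem fun t ht => hother t (ne_of_mem_erase ht))
  rw [eq_top_iff, ← (Pi.basisFun (ZMod 2) (Fin k)).span_eq, Submodule.span_le]
  rintro _ ⟨i, rfl⟩
  simpa using hsingle i

theorem identityAppendOnes_col_ne_zero {k : ℕ} (hk : 0 < k) (j : Fin (k + 2)) :
    (identityAppendOnes k).col j ≠ 0 := by
  refine Fin.addCases (fun i => ?_) (fun _ => ?_) j <;> intro h
  · simpa [identityAppendOnes] using congrFun h i
  · simpa [identityAppendOnes] using congrFun h ⟨0, hk⟩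

def Feasible (k b : ℕ) (a : (Fin k → ZMod 2) → ℕ) : Prop :=
  ∀ u : Fin k → ZMod 2, u ≠ 0 →
    ∑ v ∈ univ.filter (fun v : Fin k → ZMod 2 => v ≠ 0 ∧ u ⬝ᵥ v = 0), a v ≤ b

theorem mkInv_eq {k b M : ℕ}
    (hex : ∃ a, Feasible k b a ∧
      ∑ v ∈ univ.filter (fun v : Fin k → ZMod 2 => v ≠ 0), a v = M)
    (hle : ∀ a, Feasible k b a →
      ∑ v ∈ univ.filter (fun v : Fin k → ZMod 2 => v ≠ 0), a v ≤ M) :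
    mkInv k b = M :=
  IsGreatest.csSup_eq ⟨hex, by rintro _ ⟨a, ha, rfl⟩; exact hle a ha⟩

section ColumnMultiplicity

variable {k b : ℕ} {ι : Type*} [Fintype ι] {A : Matrix (Fin k) ι (ZMod 2)}

theorem ColumnsInHyperplaneLE.feasible (hA : ColumnsInHyperplaneLE b A) :
    Feasible k b fun v => #{j | A.col j = v} := by
  intro u hu
  rw [sum_card_fiberwise_eq_card_filter]
  refine (card_le_card fun j => ?_).trans (hA u hu)
  simp only [mem_filter, mem_univ, true_and]
  exact fun h => h.2

theorem sum_card_filter_col_eq_card (hA : ∀ j, A.col j ≠ 0) :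
    ∑ v ∈ univ.filter (fun v : Fin k → ZMod 2 => v ≠ 0), #{j | A.col j = v} =
      Fintype.card ι := by
  rw [sum_card_fiberwise_eq_card_filter, filter_true_of_mem fun j _ => by simpa using hA j,
    card_univ]

end ColumnMultiplicity

theorem Feasible.exists_columnsInHyperplaneLE {k b n : ℕ} {a : (Fin k → ZMod 2) → ℕ}
    (ha : Feasible k b a)
    (hn : n ≤ ∑ v ∈ univ.filter (fun v : Fin k → ZMod 2 => v ≠ 0), a v) :
    ∃ A : Matrix (Fin k) (Fin n) (ZMod 2), ColumnsInHyperplaneLE b A := by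
  -- `S` lists every nonzero `v` with multiplicity `a v`; its first `n` entries are the columns.
  set S := (univ.filter fun v : Fin k → ZMod 2 => v ≠ 0).sigma fun v => range (a v)
  obtain ⟨T, hTS, hT⟩ := exists_subset_card_eq (s := S) (by simpa [S] using hn)
  let e := T.equivFinOfCardEq hT
  refine ⟨of fun i j => (e.symm j).1.1 i, fun u hu => ?_⟩
  calc #{j | (u ᵥ* of fun i j => (e.symm j).1.1 i) j = 0}
      ≤ #{x ∈ S | u ⬝ᵥ x.1 = 0} := by
        refine card_le_card_of_injOn (fun j => (e.symm j).1) (fun j hj => ?_) ?_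
        · exact mem_filter.mpr ⟨hTS (e.symm j).2, (mem_filter.mp hj).2⟩
        · exact fun j _ j' _ h => e.symm.injective (Subtype.ext h)
    _ = #((univ.filter fun v => v ≠ 0 ∧ u ⬝ᵥ v = 0).sigma fun v => range (a v)) := by
        congr 1
        ext ⟨v, i⟩
        simp only [S, mem_filter, mem_sigma, mem_univ, true_and]
        tauto
    _ ≤ b := by simpa using ha u hu

theorem card_filter_dotProduct_eq_zero {K : Type*} [Field K] [Fintype K] [DecidableEq K]
    {k : ℕ} {v : Fin k → K} (hv : v ≠ 0) :
    #{u | u ⬝ᵥ v = 0} = Fintype.card K ^ (k - 1) := by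
  let φ := dotProductBilin K K v
  obtain ⟨i, hi⟩ : ∃ i, v i ≠ 0 := Function.ne_iff.mp hv
  have hrange : LinearMap.range φ = ⊤ :=
    LinearMap.range_eq_top.mpr fun c =>
      ⟨Pi.single i (c / v i), by simp [φ, mul_div_cancel₀ _ hi]⟩
  have hker := LinearMap.finrank_range_add_finrank_ker φ
  rw [hrange, finrank_top, Module.finrank_self, Module.finrank_fin_fun] at hker
  classical
  calc #{u | u ⬝ᵥ v = 0} = Fintype.card (LinearMap.ker φ) := by
        rw [Fintype.card_subtype]
        simp [φ, dotProduct_comm]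
    _ = Fintype.card K ^ (k - 1) := by rw [Module.card_eq_pow_finrank (K := K)]; congr 1; omega

theorem Feasible.mul_sum_le {k b : ℕ} {a : (Fin k → ZMod 2) → ℕ} (ha : Feasible k b a) :
    (2 ^ (k - 1) - 1) * ∑ v ∈ univ.filter (fun v : Fin k → ZMod 2 => v ≠ 0), a v ≤
      (2 ^ k - 1) * b := by
  have horth (v : Fin k → ZMod 2) (hv : v ≠ 0) :
      #{u | u ≠ 0 ∧ u ⬝ᵥ v = 0} = 2 ^ (k - 1) - 1 := by
    rw [← filter_filter, filter_ne', filter_erase, card_erase_of_mem (by simp),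
      card_filter_dotProduct_eq_zero hv, ZMod.card]
  calc (2 ^ (k - 1) - 1) * ∑ v ∈ univ.filter (fun v : Fin k → ZMod 2 => v ≠ 0), a v
      = ∑ v ∈ univ.filter (fun v : Fin k → ZMod 2 => v ≠ 0),
          #{u | u ≠ 0 ∧ u ⬝ᵥ v = 0} * a v := by
        rw [mul_sum]
        exact sum_congr rfl fun v hv => by rw [horth v (mem_filter.mp hv).2]
    _ = ∑ u ∈ univ.filter (fun u : Fin k → ZMod 2 => u ≠ 0),
          ∑ v ∈ univ.filter (fun v => v ≠ 0 ∧ u ⬝ᵥ v = 0), a v := by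
        rw [sum_comm' (t' := univ.filter fun v : Fin k → ZMod 2 => v ≠ 0)
          (s' := fun v => univ.filter fun u => u ≠ 0 ∧ u ⬝ᵥ v = 0)]
        · simp only [sum_const, smul_eq_mul]
        · intro u v
          simp only [mem_filter, mem_univ, true_and]
          tauto
    _ ≤ ∑ _u ∈ univ.filter (fun u : Fin k → ZMod 2 => u ≠ 0), b :=
        sum_le_sum fun u hu => ha u (mem_filter.mp hu).2
    _ = (2 ^ k - 1) * b := by
        rw [sum_const, smul_eq_mul, filter_ne', card_erase_of_mem (mem_univ _), card_univ]
        simp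

/-- A hyperplane `u⊥` contains four of the eight odd-weight vectors, or none if `u = 1`. -/
def oddWeightIndicator : (Fin 4 → ZMod 2) → ℕ := fun v => if ∑ i, v i = 1 then 1 else 0

theorem feasible_oddWeightIndicator : Feasible 4 4 oddWeightIndicator := by
  unfold Feasible oddWeightIndicator
  decide

theorem sum_oddWeightIndicator :
    ∑ v ∈ univ.filter (fun v : Fin 4 → ZMod 2 => v ≠ 0), oddWeightIndicator v = 8 := by
  decide

theorem mkInv_at_k (k : ℕ) (hk : 5 ≤ k) :
    mkInv k k = k + 2 ∧ mkInv 4 4 = 8 ∧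
    (¬ ∃ A : Matrix (Fin k) (Fin (k + 3)) (ZMod 2), SpanProp k (k + 3) (k + 1) A) ∧
    (∃ A : Matrix (Fin k) (Fin (k + 2)) (ZMod 2), SpanProp k (k + 2) (k + 1) A) := by
  have hupper (a) (ha : Feasible k k a) :
      ∑ v ∈ univ.filter (fun v : Fin k → ZMod 2 => v ≠ 0), a v ≤ k + 2 := by
    by_contra! h
    obtain ⟨A, hA⟩ := ha.exists_columnsInHyperplaneLE h
    have := le_four_of_columnsInHyperplaneLE hA
    omega
  have hlower := (spanProp_identityAppendOnes k).columnsInHyperplaneLE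
  refine ⟨mkInv_eq ⟨_, hlower.feasible, ?_⟩ hupper,
    mkInv_eq ⟨_, feasible_oddWeightIndicator, sum_oddWeightIndicator⟩
      fun a ha => by have h : 7 * _ ≤ 15 * 4 := ha.mul_sum_le; omega,
    fun ⟨A, hA⟩ => by have := le_four_of_columnsInHyperplaneLE hA.columnsInHyperplaneLE; omega,
    ⟨_, spanProp_identityAppendOnes k⟩⟩
  rw [sum_card_filter_col_eq_card (identityAppendOnes_col_ne_zero (by omega)), Fintype.card_fin]
end

section
/- Write b = (2^{k−1} − 1)Q + R with 0 ≤ R ≤ 2^{k−1} − 2 and k ≥ 2, and write m_k(b) = (2^k − 1)Q + S. Then R ≤ S ≤ 2R; that is, (2^k − 1)Q + R ≤ m_k(b) ≤ (2^k − 1)Q + 2R. -/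
open Matrix Finset

/-!
Summing the constraint at `u` over all nonzero `u` counts each `a v` once for every nonzero
`u ⊥ v`, i.e. `2^(k-1) - 1` times, so `(2^(k-1) - 1) · ∑ a ≤ (2^k - 1) · b`; with
`b = (2^(k-1) - 1) Q + R` and `R < 2^(k-1) - 1` this rounds down to `∑ a ≤ (2^k - 1) Q + 2R`.
The lower bound is attained by the constant tuple `Q` with `R` added at one nonzero vector.
-/

section Orthogonal

variable {F ι : Type*} [Field F] [Fintype F] [DecidableEq F] [Fintype ι] [DecidableEq ι]

theorem card_filter_dotProduct_eq_zero_s19 {u : ι → F} (hu : u ≠ 0) :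
    #{v | u ⬝ᵥ v = 0} = Fintype.card F ^ (Fintype.card ι - 1) := by
  set f := dotProductEquiv F ι u
  have hf : f ≠ 0 := (LinearEquiv.map_ne_zero_iff _).mpr hu
  have hrank := Module.Dual.finrank_ker_add_one_of_ne_zero hf
  rw [Module.finrank_fintype_fun_eq_card] at hrank
  have hker : #{v | u ⬝ᵥ v = 0} = Nat.card (LinearMap.ker f) := by
    rw [← Nat.card_eq_finsetCard]
    exact Nat.card_congr (Equiv.subtypeEquivRight fun v => by simp [f])
  rw [hker, Module.natCard_eq_pow_finrank (K := F), Nat.card_eq_fintype_card, ← hrank,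
    Nat.add_sub_cancel]

theorem card_filter_ne_zero_and_dotProduct_eq_zero {u : ι → F} (hu : u ≠ 0) :
    #{v | v ≠ 0 ∧ u ⬝ᵥ v = 0} = Fintype.card F ^ (Fintype.card ι - 1) - 1 := by
  rw [← filter_filter, filter_ne', filter_erase, card_erase_of_mem (by simp),
    card_filter_dotProduct_eq_zero_s19 hu]

theorem card_filter_ne_zero : #{v : ι → F | v ≠ 0} = Fintype.card F ^ Fintype.card ι - 1 := by
  rw [filter_ne', card_erase_of_mem (mem_univ _), card_univ, Fintype.card_fun]

end Orthogonal

theorem Finset.sum_const_add_single {α M : Type*} [DecidableEq α] [AddCommMonoid M]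
    (s : Finset α) (c r : M) (x : α) :
    ∑ v ∈ s, (c + (Pi.single x r : α → M) v) = #s • c + if x ∈ s then r else 0 := by
  rw [sum_add_distrib, sum_const, sum_pi_single']

theorem Nat.le_of_mul_le_mul_add_lt {d m n r : ℕ} (h : d * m ≤ d * n + r) (hr : r < d) :
    m ≤ n :=
  Nat.lt_succ_iff.mp <| Nat.lt_of_mul_lt_mul_left <| h.trans_lt <| by rw [Nat.mul_succ]; omega

def IsFeasible (k b : ℕ) (a : (Fin k → ZMod 2) → ℕ) : Prop :=
  ∀ u : Fin k → ZMod 2, u ≠ 0 → ∑ v with v ≠ 0 ∧ u ⬝ᵥ v = 0, a v ≤ b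

section Feasible

variable {k b : ℕ}

theorem mkInv_le {M : ℕ} (hM : ∀ a, IsFeasible k b a → ∑ v with v ≠ 0, a v ≤ M) :
    mkInv k b ≤ M := by
  refine csSup_le ⟨0, 0, fun u _ => by simp, by simp⟩ ?_
  rintro m ⟨a, ha, rfl⟩
  exact hM a ha

theorem le_mkInv {M : ℕ}
    (hM : ∀ a, IsFeasible k b a → ∑ v with v ≠ 0, a v ≤ M)
    {a : (Fin k → ZMod 2) → ℕ} (ha : IsFeasible k b a) :
    ∑ v with v ≠ 0, a v ≤ mkInv k b := by
  refine le_csSup ⟨M, ?_⟩ ⟨a, ha, rfl⟩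
  rintro m ⟨a', ha', rfl⟩
  exact hM a' ha'

theorem sum_sum_orthogonal_eq_mul_sum (a : (Fin k → ZMod 2) → ℕ) :
    ∑ u with u ≠ 0, ∑ v with v ≠ 0 ∧ u ⬝ᵥ v = 0, a v
      = (2 ^ (k - 1) - 1) * ∑ v with v ≠ 0, a v := by
  rw [sum_comm' (t' := {v | v ≠ 0}) (s' := fun v => {u | u ≠ 0 ∧ v ⬝ᵥ u = 0})
    (fun u v => by simp only [mem_filter, mem_univ, true_and, dotProduct_comm u]; tauto),
    mul_sum]
  refine sum_congr rfl fun v hv => ?_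
  rw [sum_const, smul_eq_mul, card_filter_ne_zero_and_dotProduct_eq_zero (mem_filter.mp hv).2,
    ZMod.card, Fintype.card_fin]

theorem mul_sum_le_of_isFeasible {a : (Fin k → ZMod 2) → ℕ} (ha : IsFeasible k b a) :
    (2 ^ (k - 1) - 1) * ∑ v with v ≠ 0, a v ≤ (2 ^ k - 1) * b := by
  calc _ = _ := (sum_sum_orthogonal_eq_mul_sum a).symm
    _ ≤ ∑ u : Fin k → ZMod 2 with u ≠ 0, b :=
      sum_le_sum fun u hu => ha u (mem_filter.mp hu).2
    _ = (2 ^ k - 1) * b := by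
      rw [sum_const, smul_eq_mul, card_filter_ne_zero, ZMod.card, Fintype.card_fin]

theorem isFeasible_const_add_single (Q R : ℕ) (v₀ : Fin k → ZMod 2)
    (hb : (2 ^ (k - 1) - 1) * Q + R ≤ b) :
    IsFeasible k b (fun v => Q + (Pi.single v₀ R : (Fin k → ZMod 2) → ℕ) v) := by
  intro u hu
  rw [sum_const_add_single, card_filter_ne_zero_and_dotProduct_eq_zero hu, ZMod.card,
    Fintype.card_fin, smul_eq_mul]
  split_ifs <;> omega

theorem sum_const_add_single_of_ne_zero {Q R : ℕ} {v₀ : Fin k → ZMod 2} (hv₀ : v₀ ≠ 0) :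
    ∑ v with v ≠ 0, (Q + (Pi.single v₀ R : (Fin k → ZMod 2) → ℕ) v) =
      (2 ^ k - 1) * Q + R := by
  rw [sum_const_add_single, if_pos (by simpa using hv₀), card_filter_ne_zero, ZMod.card,
    Fintype.card_fin, smul_eq_mul]

end Feasible

theorem mkInv_bounds (k b Q R : ℕ) (hk : 2 ≤ k)
    (hQ : Q = b / (2 ^ (k - 1) - 1)) (hR : R = b % (2 ^ (k - 1) - 1)) :
    (2 ^ k - 1) * Q + R ≤ mkInv k b ∧ mkInv k b ≤ (2 ^ k - 1) * Q + 2 * R := by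
  set D := 2 ^ (k - 1) - 1
  have hD_pos : 0 < D := Nat.sub_pos_of_lt (Nat.one_lt_two_pow (by omega))
  have hN : 2 ^ k - 1 = 2 * D + 1 := by
    have : 2 ^ k = 2 * 2 ^ (k - 1) := by rw [← pow_succ', Nat.sub_add_cancel (by omega)]
    omega
  have hb : D * Q + R = b := hQ ▸ hR ▸ Nat.div_add_mod b D
  have hRD : R < D := hR ▸ Nat.mod_lt b hD_pos
  have hbound : ∀ a, IsFeasible k b a →
      ∑ v with v ≠ 0, a v ≤ (2 ^ k - 1) * Q + 2 * R := fun a ha =>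
    Nat.le_of_mul_le_mul_add_lt (hr := hRD) <| calc
      D * _ ≤ (2 ^ k - 1) * b := mul_sum_le_of_isFeasible ha
      _ = D * ((2 ^ k - 1) * Q + 2 * R) + R := by rw [hN, ← hb]; ring
  have : NeZero k := ⟨by omega⟩
  obtain ⟨v₀, hv₀⟩ := exists_ne (0 : Fin k → ZMod 2)
  refine ⟨?_, mkInv_le hbound⟩
  rw [← sum_const_add_single_of_ne_zero hv₀]
  exact le_mkInv hbound (isFeasible_const_add_single Q R v₀ hb.le)
end
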